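/- Let A be a k×j matrix with entries in {0,1} such that: (i) no two columns of A are equal; (ii) no two rows of A are equal; (iii) some column of A has all entries equal to 1. Then the rank of A over ℝ (equivalently over ℚ) is at least min(k, ⌊log₂ j⌋ + 1). -/

import Mathlib

/-!
Choose `r = rank A` rows spanning the row space. A column is determined by its entries in these
rows, so if `2 ^ r ≤ j` every 0/1 pattern on the chosen rows occurs as a column. If moreover
`r < k`, some other row is a linear combination of the chosen ones; evaluating it at the columns
with patterns `{w}` and "all ones" shows that the coefficients are 0 or 1 and sum to 0 or 1. So
that row is zero, which the all-ones column forbids, or equals a chosen row, which distinctness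
of rows forbids.
-/

open Finset Submodule

theorem eq_ite_eq_one_of_eq_zero_or_eq_one {R : Type*} [Zero R] [One R] [DecidableEq R] {a : R}
    (ha : a = 0 ∨ a = 1) : a = if a = 1 then 1 else 0 := by
  rcases ha with rfl | rfl <;> simp

theorem Matrix.exists_finset_subset_range_span_eq_card_eq_rank {m n R : Type*} [Finite m]
    [Fintype n] [Field R] (A : Matrix m n R) :
    ∃ t : Finset (n → R), ↑t ⊆ Set.range A ∧ span R ↑t = span R (Set.range A) ∧
      t.card = A.rank := by
  obtain ⟨s, hsA, hspan, hli⟩ := exists_linearIndependent R (Set.range A)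
  lift s to Finset (n → R) using (Set.finite_range A).subset hsA
  refine ⟨s, hsA, hspan, ?_⟩
  rw [A.rank_eq_finrank_span_row, Matrix.row, ← hspan, finrank_span_finset_eq_card hli]

section Patterns

variable {n R : Type*} [DecidableEq R] {t : Finset (n → R)}

theorem exists_filter_eq_of_two_pow_le [Fintype n] [Zero R] [One R]
    (h01 : ∀ w ∈ t, ∀ v, w v = 0 ∨ w v = 1)
    (hdet : ∀ v v', (∀ w ∈ t, w v = w v') → v = v') (hcard : 2 ^ t.card ≤ Fintype.card n) :
    ∀ p ⊆ t, ∃ v, t.filter (· v = 1) = p := by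
  classical
  set pattern : n → Finset (n → R) := fun v => t.filter (· v = 1)
  have hinj : Function.Injective pattern := fun v v' h => hdet v v' fun w hw => by
    have hiff : w v = 1 ↔ w v' = 1 := by simpa [pattern, hw] using Finset.ext_iff.mp h w
    rw [eq_ite_eq_one_of_eq_zero_or_eq_one (h01 w hw v),
      eq_ite_eq_one_of_eq_zero_or_eq_one (h01 w hw v'), if_congr hiff rfl rfl]
  have himage : univ.image pattern = t.powerset := by
    refine eq_of_subset_of_card_le (fun p hp => ?_) ?_
    · obtain ⟨v, -, rfl⟩ := mem_image.mp hp
      exact mem_powerset.mpr (filter_subset _ _)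
    · rwa [card_powerset, card_image_of_injective _ hinj, card_univ]
  intro p hp
  obtain ⟨v, -, hv⟩ := mem_image.mp (himage ▸ mem_powerset.mpr hp)
  exact ⟨v, hv⟩

variable [Semiring R]

theorem sum_smul_apply_eq_sum_filter (c : (n → R) → R) {v : n}
    (h01 : ∀ w ∈ t, w v = 0 ∨ w v = 1) :
    (∑ w ∈ t, c w • w) v = ∑ w ∈ t.filter (· v = 1), c w := by
  rw [Finset.sum_apply, sum_filter]
  refine sum_congr rfl fun w hw => ?_
  split_ifs with h1
  · simp [h1]
  · simp [(h01 w hw).resolve_right h1]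

theorem sum_smul_eq_zero_or_mem [CharZero R] (c : (n → R) → R)
    (ht01 : ∀ w ∈ t, ∀ v, w v = 0 ∨ w v = 1) (hpat : ∀ p ⊆ t, ∃ v, t.filter (· v = 1) = p)
    (h01 : ∀ v, (∑ w ∈ t, c w • w) v = 0 ∨ (∑ w ∈ t, c w • w) v = 1) :
    ∑ w ∈ t, c w • w = 0 ∨ ∑ w ∈ t, c w • w ∈ t := by
  have eval (p) (hp : p ⊆ t) : ∑ w ∈ p, c w = 0 ∨ ∑ w ∈ p, c w = 1 := by
    obtain ⟨v, rfl⟩ := hpat p hp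
    simpa [sum_smul_apply_eq_sum_filter c fun w hw => ht01 w hw v] using h01 v
  have hc (w) (hw : w ∈ t) : c w = 0 ∨ c w = 1 := by
    simpa using eval {w} (singleton_subset_iff.mpr hw)
  set T := t.filter (c · = 1)
  have hsum : ∑ w ∈ t, c w • w = ∑ w ∈ T, w := by
    rw [sum_filter]
    exact sum_congr rfl fun w hw => by rcases hc w hw with h | h <;> simp [h]
  have hcard : T.card = 0 ∨ T.card = 1 := by
    have hcT : ∑ w ∈ t, c w = T.card := by
      rw [← sum_boole]
      exact sum_congr rfl fun w hw => eq_ite_eq_one_of_eq_zero_or_eq_one (hc w hw)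
    exact_mod_cast hcT ▸ eval t subset_rfl
  rw [hsum]
  rcases hcard with h | h
  · simp [card_eq_zero.mp h]
  · obtain ⟨w, hw⟩ := card_eq_one.mp h
    right
    simpa [hw] using (filter_subset _ t) (hw ▸ mem_singleton_self w)

end Patterns

theorem rank_of_zero_one_matrix (k j : ℕ) (A : Matrix (Fin k) (Fin j) ℝ)
    (h01 : ∀ u v, A u v = 0 ∨ A u v = 1)
    (hcols : Function.Injective fun v u => A u v)
    (hrows : Function.Injective A)
    (hones : ∃ v, ∀ u, A u v = 1) :
    min k (Nat.log 2 j + 1) ≤ A.rank := by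
  classical
  obtain ⟨v₁, hv₁⟩ := hones
  rcases le_or_gt k A.rank with hk | hk
  · exact (min_le_left _ _).trans hk
  refine (min_le_right _ _).trans ?_
  rw [Nat.add_one_le_iff, Nat.log_lt_iff_lt_pow one_lt_two (Fin.pos v₁).ne']
  by_contra! hle
  obtain ⟨t, htA, hspan, hcard⟩ := A.exists_finset_subset_range_span_eq_card_eq_rank
  have hrow_mem (u) : A u ∈ span ℝ (t : Set (Fin j → ℝ)) := hspan ▸ subset_span ⟨u, rfl⟩
  have ht01 (w) (hw : w ∈ t) : ∀ v, w v = 0 ∨ w v = 1 := by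
    obtain ⟨u, rfl⟩ := htA hw
    exact h01 u
  have hdet (v v' : Fin j) (h : ∀ w ∈ t, w v = w v') : v = v' :=
    hcols <| funext fun u => LinearMap.eqOn_span'
      (f := (LinearMap.proj v : (Fin j → ℝ) →ₗ[ℝ] ℝ)) (g := LinearMap.proj v')
      (fun w hw => h w hw) (hrow_mem u)
  have hpat := exists_filter_eq_of_two_pow_le ht01 hdet (by simpa [hcard] using hle)
  obtain ⟨x, hx, hxt⟩ := exists_mem_notMem_of_card_lt_card (s := t) (t := univ.image A)
    (by rwa [card_image_of_injective _ hrows, card_univ, Fintype.card_fin, hcard])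
  obtain ⟨u₀, -, rfl⟩ := mem_image.mp hx
  obtain ⟨c, -, hc⟩ := mem_span_finset.mp (hrow_mem u₀)
  rcases sum_smul_eq_zero_or_mem c ht01 hpat (hc ▸ h01 u₀) with h0 | hmem
  · simpa [hv₁ u₀] using congrFun (hc.symm.trans h0) v₁
  · exact hxt (hc ▸ hmem)
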